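/- Let X and Y be independent exponential random variables with means σ_1² > 0 and σ_2² > 0, and let Q(t) = (1/√(2π)) ∫_t^∞ e^{−s²/2} ds. Then lim_{γ→∞} γ² · E[ min{ Q(√(2γX)), Q(√(2γY)) } ] = 3/(8 σ_1² σ_2²). -/

import Mathlib

open MeasureTheory ProbabilityTheory Filter

/-- The Gaussian tail function `Q t = (1/√(2π)) ∫_t^∞ e^{-s²/2} ds`. -/
noncomputable def gaussQ (t : ℝ) : ℝ :=
  (1 / Real.sqrt (2 * Real.pi)) * ∫ s in Set.Ioi t, Real.exp (-s ^ 2 / 2)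

section Aux

open Real Set

lemma integrable_gk : MeasureTheory.Integrable (fun s : ℝ => Real.exp (-s ^ 2 / 2)) := by
  have h := integrable_exp_neg_mul_sq (b := (1:ℝ)/2) (by norm_num)
  convert h using 2 with s
  ring_nf

lemma gk_nonneg (s : ℝ) : 0 ≤ Real.exp (-s ^ 2 / 2) := (Real.exp_pos _).le

lemma gaussQ_antitone : Antitone gaussQ := by
  intro a b hab
  unfold gaussQ
  apply mul_le_mul_of_nonneg_left _ (by positivity)
  exact setIntegral_mono_set integrable_gk.integrableOn
    (Filter.Eventually.of_forall gk_nonneg)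
    (HasSubset.Subset.eventuallyLE (Set.Ioi_subset_Ioi hab))

lemma gaussQ_nonneg (t : ℝ) : 0 ≤ gaussQ t := by
  unfold gaussQ
  apply mul_nonneg (by positivity)
  exact setIntegral_nonneg measurableSet_Ioi fun s _ => gk_nonneg s

lemma gaussQ_le_one (t : ℝ) : gaussQ t ≤ 1 := by
  unfold gaussQ
  have h2 : (∫ s : ℝ, Real.exp (-s ^ 2 / 2)) = Real.sqrt (2 * Real.pi) := by
    have := integral_gaussian ((1:ℝ)/2)
    rw [show (π / ((1:ℝ)/2)) = 2 * π by ring] at this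
    rw [← this]
    congr 1 with s
    ring_nf
  have hpos : 0 < Real.sqrt (2 * Real.pi) := Real.sqrt_pos.2 (by positivity)
  calc (1 / Real.sqrt (2 * Real.pi)) * ∫ s in Set.Ioi t, Real.exp (-s ^ 2 / 2)
      ≤ (1 / Real.sqrt (2 * Real.pi)) * Real.sqrt (2 * Real.pi) := by
        apply mul_le_mul_of_nonneg_left _ (by positivity)
        exact le_trans (setIntegral_le_integral integrable_gk
          (Filter.Eventually.of_forall gk_nonneg)) (le_of_eq h2)
    _ = 1 := by field_simp

lemma gaussQ_measurable : Measurable gaussQ := gaussQ_antitone.measurable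

lemma expMeasure_eq (r : ℝ) : expMeasure r = volume.withDensity (exponentialPDF r) := rfl

lemma expMeasure_Iic {r : ℝ} (hr : 0 < r) (a : ℝ) :
    expMeasure r (Iic a) = ENNReal.ofReal (if 0 ≤ a then 1 - Real.exp (-(r * a)) else 0) := by
  rw [expMeasure_eq, withDensity_apply _ measurableSet_Iic,
    lintegral_exponentialPDF_eq_antiDeriv hr]

lemma expMeasure_Ioi {r : ℝ} (hr : 0 < r) (a : ℝ) :
    expMeasure r (Ioi a) = ENNReal.ofReal (if 0 ≤ a then Real.exp (-(r * a)) else 1) := by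
  haveI := isProbabilityMeasure_expMeasure hr
  have hc : expMeasure r (Ioi a) = 1 - expMeasure r (Iic a) := by
    rw [← Set.compl_Iic, prob_compl_eq_one_sub measurableSet_Iic]
  rw [hc, expMeasure_Iic hr]
  split_ifs with h
  · have he : Real.exp (-(r * a)) ≤ 1 := Real.exp_le_one_iff.2 (by nlinarith)
    rw [← ENNReal.ofReal_one, ← ENNReal.ofReal_sub _ (by linarith)]
    norm_num
  · simp

lemma map_min_exp {Ω : Type*} [MeasurableSpace Ω] (μ : Measure Ω) [IsProbabilityMeasure μ]
    (X Y : Ω → ℝ) (hX : Measurable X) (hY : Measurable Y) (hindep : IndepFun X Y μ)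
    {r₁ r₂ : ℝ} (hr₁ : 0 < r₁) (hr₂ : 0 < r₂)
    (hdistX : Measure.map X μ = expMeasure r₁)
    (hdistY : Measure.map Y μ = expMeasure r₂) :
    Measure.map (fun ω => min (X ω) (Y ω)) μ = expMeasure (r₁ + r₂) := by
  haveI := isProbabilityMeasure_expMeasure (show (0:ℝ) < r₁ + r₂ by linarith)
  haveI : IsProbabilityMeasure (Measure.map (fun ω => min (X ω) (Y ω)) μ) :=
    Measure.isProbabilityMeasure_map (hX.min hY).aemeasurable
  apply Measure.ext_of_Iic
  intro a
  rw [Measure.map_apply (hX.min hY) measurableSet_Iic]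
  have hset : (fun ω => min (X ω) (Y ω)) ⁻¹' Iic a = (X ⁻¹' Ioi a ∩ Y ⁻¹' Ioi a)ᶜ := by
    ext ω
    simp only [Set.mem_preimage, Set.mem_Iic, Set.mem_compl_iff, Set.mem_inter_iff,
      Set.mem_Ioi, not_and_or, not_lt, min_le_iff]
  rw [hset, prob_compl_eq_one_sub ((hX measurableSet_Ioi).inter (hY measurableSet_Ioi)),
    hindep.measure_inter_preimage_eq_mul _ _ measurableSet_Ioi measurableSet_Ioi,
    ← Measure.map_apply hX measurableSet_Ioi, ← Measure.map_apply hY measurableSet_Ioi,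
    hdistX, hdistY, expMeasure_Ioi hr₁, expMeasure_Ioi hr₂, expMeasure_Iic (by linarith)]
  split_ifs with h
  · rw [← ENNReal.ofReal_mul (by positivity), ← Real.exp_add]
    have he : Real.exp (-(r₁ * a) + -(r₂ * a)) ≤ 1 := Real.exp_le_one_iff.2 (by nlinarith)
    rw [← ENNReal.ofReal_one, ← ENNReal.ofReal_sub _ (by positivity)]
    congr 1
    ring_nf
  · simp

lemma exp_rate_integrableOn_Ioi {r : ℝ} (hr : 0 < r) :
    IntegrableOn (fun x : ℝ => r * Real.exp (-(r * x))) (Ioi 0) := by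
  have h := (exp_neg_integrableOn_Ioi 0 hr).const_mul r
  simpa [neg_mul, IntegrableOn] using h

lemma exponentialPDFReal_eq' (r x : ℝ) :
    exponentialPDFReal r x = if 0 ≤ x then r * Real.exp (-(r * x)) else 0 := by
  rw [exponentialPDFReal, gammaPDFReal]
  simp only [rpow_one, Real.Gamma_one, div_one, sub_self, rpow_zero, mul_one]

lemma fubini_core {r γ : ℝ} (hr : 0 < r) (hγ : 0 < γ) :
    (∫ x in Ioi (0:ℝ), r * Real.exp (-(r * x)) *
        ∫ s in Ioi (Real.sqrt (2 * γ * x)), Real.exp (-s ^ 2 / 2))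
      = ∫ s in Ioi (0:ℝ), (1 - Real.exp (-(r * (s ^ 2 / (2 * γ))))) * Real.exp (-s ^ 2 / 2) := by
  set S : Set (ℝ × ℝ) := {p | 0 < p.1 ∧ Real.sqrt (2 * γ * p.1) < p.2} with hSdef
  set g : ℝ × ℝ → ℝ := fun p => r * Real.exp (-(r * p.1)) * Real.exp (-p.2 ^ 2 / 2) with hgdef
  have hS : MeasurableSet S := by
    apply MeasurableSet.inter (measurableSet_lt measurable_const measurable_fst)
    exact measurableSet_lt ((continuous_const.mul continuous_fst).sqrt.measurable) measurable_snd
  have hg : Continuous g := by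
    apply Continuous.mul
    · exact continuous_const.mul ((continuous_const.mul continuous_fst).neg.rexp)
    · exact Continuous.rexp (by continuity)
  have hgnn : ∀ p, 0 ≤ g p := fun p => by positivity
  set F : ℝ × ℝ → ℝ := S.indicator g with hFdef
  have hH : Integrable (fun p : ℝ × ℝ =>
      (Ioi (0:ℝ)).indicator (fun x => r * Real.exp (-(r * x))) p.1 * Real.exp (-p.2 ^ 2 / 2))
      (volume.prod volume) :=
    Integrable.mul_prod ((exp_rate_integrableOn_Ioi hr).integrable_indicator measurableSet_Ioi)
      integrable_gk
  have hFmeas : AEStronglyMeasurable F (volume.prod volume) :=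
    (hg.measurable.indicator hS).aestronglyMeasurable
  have hFint : Integrable F (volume.prod volume) := by
    refine hH.mono' hFmeas (Filter.Eventually.of_forall fun p => ?_)
    by_cases hp : p ∈ S
    · rw [hFdef, Set.indicator_of_mem hp, Real.norm_eq_abs, abs_of_nonneg (hgnn p)]
      rw [Set.indicator_of_mem (show p.1 ∈ Ioi (0:ℝ) from hp.1)]
    · rw [hFdef, Set.indicator_of_notMem hp]
      simp only [norm_zero]
      exact mul_nonneg (Set.indicator_nonneg (fun a _ => by positivity) _) (Real.exp_pos _).le
  have hswap : (∫ x : ℝ, ∫ s : ℝ, F (x, s)) = ∫ s : ℝ, ∫ x : ℝ, F (x, s) :=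
    integral_integral_swap (f := fun x s => F (x, s)) hFint
  have claimA : ∀ x : ℝ, (∫ s : ℝ, F (x, s)) = (Ioi (0:ℝ)).indicator
      (fun x => r * Real.exp (-(r * x)) *
        ∫ s in Ioi (Real.sqrt (2 * γ * x)), Real.exp (-s ^ 2 / 2)) x := by
    intro x
    by_cases hx : 0 < x
    · rw [Set.indicator_of_mem (show x ∈ Ioi (0:ℝ) from hx)]
      have : ∀ s : ℝ, F (x, s) = (Ioi (Real.sqrt (2 * γ * x))).indicator
          (fun s => r * Real.exp (-(r * x)) * Real.exp (-s ^ 2 / 2)) s := by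
        intro s
        by_cases hs : Real.sqrt (2 * γ * x) < s
        · rw [hFdef, Set.indicator_of_mem (show (x, s) ∈ S from ⟨hx, hs⟩),
            Set.indicator_of_mem (show s ∈ Ioi _ from hs)]
        · have hns : s ∉ Ioi (Real.sqrt (2 * γ * x)) := hs
          have hns2 : (x, s) ∉ S := fun h => hs h.2
          rw [hFdef, Set.indicator_of_notMem hns2, Set.indicator_of_notMem hns]
      simp_rw [this]
      rw [integral_indicator measurableSet_Ioi, integral_const_mul]
    · rw [Set.indicator_of_notMem (by simpa using hx)]
      have : ∀ s : ℝ, F (x, s) = 0 := fun s => Set.indicator_of_notMem (fun h => hx h.1) _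
      simp_rw [this, integral_zero]
  have claimB : ∀ s : ℝ, (∫ x : ℝ, F (x, s)) = (Ioi (0:ℝ)).indicator
      (fun s => (1 - Real.exp (-(r * (s ^ 2 / (2 * γ))))) * Real.exp (-s ^ 2 / 2)) s := by
    intro s
    by_cases hs : 0 < s
    · rw [Set.indicator_of_mem (show s ∈ Ioi (0:ℝ) from hs)]
      have hc : 0 < s ^ 2 / (2 * γ) := by positivity
      have hmem : ∀ x : ℝ, ((x, s) ∈ S) ↔ x ∈ Ioo 0 (s ^ 2 / (2 * γ)) := by
        intro x
        simp only [hSdef, Set.mem_setOf_eq, Set.mem_Ioo]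
        constructor
        · rintro ⟨hx, hlt⟩
          refine ⟨hx, ?_⟩
          rw [Real.sqrt_lt' hs] at hlt
          rw [lt_div_iff₀ (show (0:ℝ) < 2 * γ by positivity)]
          nlinarith
        · rintro ⟨hx, hlt⟩
          refine ⟨hx, ?_⟩
          rw [Real.sqrt_lt' hs]
          rw [lt_div_iff₀ (show (0:ℝ) < 2 * γ by positivity)] at hlt
          nlinarith
      have : ∀ x : ℝ, F (x, s) = (Ioo 0 (s ^ 2 / (2 * γ))).indicator
          (fun x => r * Real.exp (-(r * x))) x * Real.exp (-s ^ 2 / 2) := by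
        intro x
        by_cases hx : (x, s) ∈ S
        · rw [hFdef, Set.indicator_of_mem hx, Set.indicator_of_mem ((hmem x).1 hx)]
        · rw [hFdef, Set.indicator_of_notMem hx,
            Set.indicator_of_notMem (fun h => hx ((hmem x).2 h))]
          simp
      simp_rw [this]
      rw [integral_mul_const, integral_indicator measurableSet_Ioo]
      congr 1
      rw [← integral_Ioc_eq_integral_Ioo, ← intervalIntegral.integral_of_le hc.le]
      rw [intervalIntegral.integral_eq_sub_of_hasDerivAt
        (f := fun a => -Real.exp (-(r * a)))
        (fun x _ => hasDerivAt_neg_exp_mul_exp)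
        (Continuous.intervalIntegrable
          (continuous_const.mul ((continuous_const.mul continuous_id).neg.rexp)) _ _)]
      simp only [mul_zero, neg_zero, Real.exp_zero]
      ring
    · rw [Set.indicator_of_notMem (by simpa using hs)]
      have : ∀ x : ℝ, F (x, s) = 0 := by
        intro x
        refine Set.indicator_of_notMem (fun h => ?_) _
        have := Real.sqrt_nonneg (2 * γ * x)
        have := h.2
        linarith
      simp_rw [this, integral_zero]
  calc (∫ x in Ioi (0:ℝ), r * Real.exp (-(r * x)) *
        ∫ s in Ioi (Real.sqrt (2 * γ * x)), Real.exp (-s ^ 2 / 2))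
      = ∫ x : ℝ, ∫ s : ℝ, F (x, s) := by
        simp_rw [claimA]
        rw [integral_indicator measurableSet_Ioi]
    _ = ∫ s : ℝ, ∫ x : ℝ, F (x, s) := hswap
    _ = ∫ s in Ioi (0:ℝ), (1 - Real.exp (-(r * (s ^ 2 / (2 * γ))))) * Real.exp (-s ^ 2 / 2) := by
        simp_rw [claimB]
        rw [integral_indicator measurableSet_Ioi]

lemma integral_Q_expMeasure {r γ : ℝ} (hr : 0 < r) (hγ : 0 < γ) :
    (∫ x, gaussQ (Real.sqrt (2 * γ * x)) ∂(expMeasure r))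
      = 1 / 2 - 1 / 2 * (Real.sqrt (1 + r / γ))⁻¹ := by
  have hmeas : Measurable fun x => Real.toNNReal (exponentialPDFReal r x) :=
    (measurable_exponentialPDFReal r).real_toNNReal
  rw [show expMeasure r = volume.withDensity
      (fun x => ((fun x => Real.toNNReal (exponentialPDFReal r x)) x : ENNReal)) from rfl,
    integral_withDensity_eq_integral_smul hmeas]
  have step1 : ∀ x : ℝ, Real.toNNReal (exponentialPDFReal r x) • gaussQ (Real.sqrt (2 * γ * x))
      = (Ici (0:ℝ)).indicator
          (fun x => r * Real.exp (-(r * x)) * gaussQ (Real.sqrt (2 * γ * x))) x := by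
    intro x
    rw [NNReal.smul_def, Real.coe_toNNReal _ (exponentialPDFReal_nonneg hr x), smul_eq_mul,
      exponentialPDFReal_eq']
    simp only [Set.indicator_apply, Set.mem_Ici]
    split_ifs with h
    · rfl
    · exact zero_mul _
  simp_rw [step1]
  rw [integral_indicator measurableSet_Ici, integral_Ici_eq_integral_Ioi]
  have step2 : ∀ x : ℝ, r * Real.exp (-(r * x)) * gaussQ (Real.sqrt (2 * γ * x))
      = (1 / Real.sqrt (2 * π)) *
        (r * Real.exp (-(r * x)) * ∫ s in Ioi (Real.sqrt (2 * γ * x)), Real.exp (-s ^ 2 / 2)) := by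
    intro x
    rw [gaussQ]
    ring
  simp_rw [step2]
  rw [integral_const_mul, fubini_core hr hγ]
  have hgauss : (∫ s in Ioi (0:ℝ), (1 - Real.exp (-(r * (s ^ 2 / (2 * γ))))) *
        Real.exp (-s ^ 2 / 2))
      = Real.sqrt (2 * π) / 2 - Real.sqrt (2 * π / (1 + r / γ)) / 2 := by
    have hb : (0:ℝ) < 1 / 2 + r / (2 * γ) := by positivity
    have hfun : ∀ s : ℝ, (1 - Real.exp (-(r * (s ^ 2 / (2 * γ))))) * Real.exp (-s ^ 2 / 2)
        = Real.exp (-(1/2) * s ^ 2) - Real.exp (-(1 / 2 + r / (2 * γ)) * s ^ 2) := by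
      intro s
      rw [sub_mul, one_mul, ← Real.exp_add]
      congr 2
      · field_simp
      · field_simp; ring
    simp_rw [hfun]
    rw [integral_sub ((integrable_exp_neg_mul_sq (by norm_num : (0:ℝ) < 1/2)).integrableOn)
        ((integrable_exp_neg_mul_sq hb).integrableOn),
      integral_gaussian_Ioi, integral_gaussian_Ioi]
    congr 2
    · rw [show π / (1/2 : ℝ) = 2 * π by ring]
    · congr 1
      field_simp
  rw [hgauss, Real.sqrt_div (by positivity : (0:ℝ) ≤ 2 * π)]
  have hS : (0:ℝ) < Real.sqrt (2 * π) := Real.sqrt_pos.2 (by positivity)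
  have hT : (0:ℝ) < Real.sqrt (1 + r / γ) := Real.sqrt_pos.2 (by positivity)
  field_simp

/-- auxiliary function capturing the second-order Taylor remainder of `(1+t)^{-1/2}`. -/
noncomputable def sqK (t : ℝ) : ℝ :=
  (Real.sqrt (1 + t) + 2) / (2 * Real.sqrt (1 + t) * (Real.sqrt (1 + t) + 1) ^ 2)

lemma sqK_zero : sqK 0 = 3 / 8 := by
  norm_num [sqK, Real.sqrt_one]

lemma continuousAt_sqK : ContinuousAt sqK 0 := by
  have hc : Continuous fun t : ℝ => Real.sqrt (1 + t) :=
    (continuous_const.add continuous_id).sqrt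
  apply ContinuousAt.div
  · exact (hc.add continuous_const).continuousAt
  · exact ((continuous_const.mul hc).mul ((hc.add continuous_const).pow 2)).continuousAt
  · norm_num [Real.sqrt_one]

lemma inv_sqrt_expansion {t : ℝ} (ht : 0 < t) :
    (Real.sqrt (1 + t))⁻¹ = 1 - t / 2 + t ^ 2 * sqK t := by
  rw [sqK]
  have hsq : Real.sqrt (1 + t) ^ 2 = 1 + t := Real.sq_sqrt (by linarith)
  have hs : 0 < Real.sqrt (1 + t) := Real.sqrt_pos.2 (by linarith)
  generalize hg : Real.sqrt (1 + t) = s at *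
  have ht2 : t = s ^ 2 - 1 := by linarith
  subst ht2
  have hs1 : s + 1 ≠ 0 := by positivity
  field_simp
  ring

lemma tendsto_sqK_comp {l : ℝ} :
    Tendsto (fun γ : ℝ => sqK (l / γ)) atTop (nhds (3 / 8)) := by
  have h1 : Tendsto (fun γ : ℝ => l / γ) atTop (nhds 0) := by
    simpa [div_eq_mul_inv] using tendsto_inv_atTop_zero.const_mul l
  have := continuousAt_sqK.tendsto.comp h1
  rwa [sqK_zero] at this

end Aux

/-- High-SNR limit of the selection-combining average: let `X, Y` be independent
exponentials with means `σ₁², σ₂² > 0`.  Then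
`lim_{γ→∞} γ² · E[min{Q(√(2γX)), Q(√(2γY))}] = 3/(8 σ₁² σ₂²)`. -/
theorem selection_combining_high_snr_limit
    {Ω : Type*} [MeasurableSpace Ω] (μ : Measure Ω) [IsProbabilityMeasure μ]
    (X Y : Ω → ℝ) (hX : Measurable X) (hY : Measurable Y) (hindep : IndepFun X Y μ)
    (σ₁sq σ₂sq : ℝ) (hσ₁ : 0 < σ₁sq) (hσ₂ : 0 < σ₂sq)
    (hdistX : Measure.map X μ = expMeasure (1 / σ₁sq))
    (hdistY : Measure.map Y μ = expMeasure (1 / σ₂sq)) :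
    Tendsto (fun γ : ℝ => γ ^ 2 *
        ∫ ω, min (gaussQ (Real.sqrt (2 * γ * X ω))) (gaussQ (Real.sqrt (2 * γ * Y ω))) ∂μ)
      atTop (nhds (3 / (8 * σ₁sq * σ₂sq))) := by
  set l₁ : ℝ := 1 / σ₁sq with hl₁def
  set l₂ : ℝ := 1 / σ₂sq with hl₂def
  have hl₁ : 0 < l₁ := by positivity
  have hl₂ : 0 < l₂ := by positivity
  have hl₃ : 0 < l₁ + l₂ := by positivity
  have hmin : Measure.map (fun ω => min (X ω) (Y ω)) μ = expMeasure (l₁ + l₂) :=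
    map_min_exp μ X Y hX hY hindep hl₁ hl₂ hdistX hdistY
  -- the expectation of Q(√(2γW)) for an exponentially distributed W
  have key : ∀ (W : Ω → ℝ), Measurable W → ∀ (ρ : ℝ), 0 < ρ →
      Measure.map W μ = expMeasure ρ → ∀ (γ : ℝ), 0 < γ →
      (∫ ω, gaussQ (Real.sqrt (2 * γ * W ω)) ∂μ)
        = 1 / 2 - 1 / 2 * (Real.sqrt (1 + ρ / γ))⁻¹ := by
    intro W hW ρ hρ hmap γ hγ
    have hm : Measurable fun x : ℝ => gaussQ (Real.sqrt (2 * γ * x)) :=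
      gaussQ_measurable.comp (Real.continuous_sqrt.measurable.comp
        (measurable_id.const_mul (2 * γ)))
    rw [← MeasureTheory.integral_map hW.aemeasurable hm.aestronglyMeasurable, hmap,
      integral_Q_expMeasure hρ hγ]
  -- integrability of each term
  have hint : ∀ (W : Ω → ℝ), Measurable W → ∀ (γ : ℝ),
      Integrable (fun ω => gaussQ (Real.sqrt (2 * γ * W ω))) μ := by
    intro W hW γ
    have hm : Measurable fun ω => gaussQ (Real.sqrt (2 * γ * W ω)) :=
      gaussQ_measurable.comp (Real.continuous_sqrt.measurable.comp (hW.const_mul (2 * γ)))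
    refine (integrable_const (1:ℝ)).mono' hm.aestronglyMeasurable
      (Filter.Eventually.of_forall fun ω => ?_)
    rw [Real.norm_eq_abs, abs_of_nonneg (gaussQ_nonneg _)]
    exact gaussQ_le_one _
  -- splitting the min
  have hsplit : ∀ (γ : ℝ), 0 < γ →
      (∫ ω, min (gaussQ (Real.sqrt (2 * γ * X ω))) (gaussQ (Real.sqrt (2 * γ * Y ω))) ∂μ)
        = (∫ ω, gaussQ (Real.sqrt (2 * γ * X ω)) ∂μ)
          + (∫ ω, gaussQ (Real.sqrt (2 * γ * Y ω)) ∂μ)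
          - ∫ ω, gaussQ (Real.sqrt (2 * γ * min (X ω) (Y ω))) ∂μ := by
    intro γ hγ
    have hmono : Monotone fun t : ℝ => Real.sqrt (2 * γ * t) := by
      intro a b hab
      exact Real.sqrt_le_sqrt (by nlinarith)
    have hpt : ∀ ω, min (gaussQ (Real.sqrt (2 * γ * X ω))) (gaussQ (Real.sqrt (2 * γ * Y ω)))
        = gaussQ (Real.sqrt (2 * γ * X ω)) + gaussQ (Real.sqrt (2 * γ * Y ω))
          - gaussQ (Real.sqrt (2 * γ * min (X ω) (Y ω))) := by
      intro ω
      rw [show Real.sqrt (2 * γ * min (X ω) (Y ω))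
          = min (Real.sqrt (2 * γ * X ω)) (Real.sqrt (2 * γ * Y ω)) from hmono.map_min,
        gaussQ_antitone.map_min]
      have := min_add_max (gaussQ (Real.sqrt (2 * γ * X ω))) (gaussQ (Real.sqrt (2 * γ * Y ω)))
      linarith
    simp_rw [hpt]
    have h12 : Integrable (fun ω => gaussQ (Real.sqrt (2 * γ * X ω))
        + gaussQ (Real.sqrt (2 * γ * Y ω))) μ := (hint X hX γ).add (hint Y hY γ)
    rw [integral_sub h12 (hint _ (hX.min hY) γ), integral_add (hint X hX γ) (hint Y hY γ)]
  -- the limiting function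
  have hG : Tendsto (fun γ : ℝ => (1/2 : ℝ) * ((l₁ + l₂) ^ 2 * sqK ((l₁ + l₂) / γ)
      - l₁ ^ 2 * sqK (l₁ / γ) - l₂ ^ 2 * sqK (l₂ / γ)))
      atTop (nhds (3 / (8 * σ₁sq * σ₂sq))) := by
    have h := (((tendsto_sqK_comp (l := l₁ + l₂)).const_mul ((l₁ + l₂) ^ 2)).sub
        ((tendsto_sqK_comp (l := l₁)).const_mul (l₁ ^ 2))).sub
        ((tendsto_sqK_comp (l := l₂)).const_mul (l₂ ^ 2))
    have h2 := h.const_mul (1/2 : ℝ)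
    have hval : (1/2 : ℝ) * ((l₁ + l₂) ^ 2 * (3/8) - l₁ ^ 2 * (3/8) - l₂ ^ 2 * (3/8))
        = 3 / (8 * σ₁sq * σ₂sq) := by
      rw [hl₁def, hl₂def]
      field_simp
      ring
    rw [hval] at h2
    exact h2
  refine Tendsto.congr' ?_ hG
  filter_upwards [Filter.eventually_gt_atTop (0:ℝ)] with γ hγ
  rw [hsplit γ hγ, key X hX l₁ hl₁ hdistX γ hγ, key Y hY l₂ hl₂ hdistY γ hγ,
    key _ (hX.min hY) (l₁ + l₂) hl₃ hmin γ hγ,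
    inv_sqrt_expansion (show (0:ℝ) < l₁ / γ by positivity),
    inv_sqrt_expansion (show (0:ℝ) < l₂ / γ by positivity),
    inv_sqrt_expansion (show (0:ℝ) < (l₁ + l₂) / γ by positivity)]
  have hγ0 : γ ≠ 0 := ne_of_gt hγ
  field_simp
  ring
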